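/- Under the same setting, defining the two-layer ReLU network f(x;θ) = (1/√m) ∑_{r=1}^m b_r·ReLU(θ_rᵀψ(x)) with |b_r| ≤ 1 and its linearization f₀(x;θ) = (1/√m) ∑_{r=1}^m b_r 𝟙(θ_{0,r}ᵀψ(x) > 0) θ_rᵀψ(x), if ∑_r ‖θ_r − θ_{0,r}‖₂² ≤ R² and d₁ ≤ ‖θ_{0,r}‖₂ for all r, then E_{x∼μ}[|f(x;θ) − f₀(x;θ)|²] ≤ 4C₀R³/(d₁√m). -/

import Mathlib

/-! Away from the hyperplane `⟪θ₀ r, ψ x⟫ = 0` the neuron `r` keeps its activation pattern, so it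
contributes nothing to `f - f₀`; it can only flip on the slab `|⟪θ₀ r, ψ x⟫| ≤ ‖θ r - θ₀ r‖`, where
its contribution is at most `‖θ r - θ₀ r‖`. Cauchy–Schwarz bounds `|f - f₀|²` pointwise by
`R² / m` times the number of slabs containing `x`, and anti-concentration gives each slab measure
at most `C₀ ‖θ r - θ₀ r‖ / d₁`; a second Cauchy–Schwarz, `∑ ‖θ r - θ₀ r‖ ≤ √m R`, finishes. -/

open MeasureTheory RealInnerProductSpace Finset

lemma abs_relu_sub_gated_le_abs_sub (a a₀ : ℝ) :
    |max a 0 - (if 0 < a₀ then 1 else 0) * a| ≤ |a - a₀| := by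
  grind

lemma relu_sub_gated_eq_zero_of_abs_sub_lt {a a₀ : ℝ} (h : |a - a₀| < |a₀|) :
    max a 0 - (if 0 < a₀ then 1 else 0) * a = 0 := by
  grind

lemma abs_relu_sub_gated_le_ite {a a₀ δ : ℝ} (h : |a - a₀| ≤ δ) :
    |max a 0 - (if 0 < a₀ then 1 else 0) * a| ≤ if |a₀| ≤ δ then δ else 0 := by
  by_cases hslab : |a₀| ≤ δ
  · rw [if_pos hslab]
    exact (abs_relu_sub_gated_le_abs_sub a a₀).trans h
  · rw [if_neg hslab, relu_sub_gated_eq_zero_of_abs_sub_lt (h.trans_lt (not_le.mp hslab)),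
      abs_zero]

lemma sq_sum_ite_le_sum_sq_mul_card {ι : Type*} (s : Finset ι) (c : ι → ℝ) (p : ι → Prop)
    [DecidablePred p] :
    (∑ r ∈ s, if p r then c r else 0) ^ 2 ≤ (∑ r ∈ s, c r ^ 2) * #{r ∈ s | p r} := by
  rw [← sum_filter, mul_comm]
  calc (∑ r ∈ s with p r, c r) ^ 2 ≤ #{r ∈ s | p r} * ∑ r ∈ s with p r, c r ^ 2 :=
        sq_sum_le_card_mul_sum_sq
    _ ≤ #{r ∈ s | p r} * ∑ r ∈ s, c r ^ 2 := by
        gcongr ?_ * ?_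
        exact sum_le_sum_of_subset_of_nonneg (filter_subset p s) fun r _ _ => sq_nonneg (c r)

lemma sum_le_sqrt_card_mul_of_sum_sq_le {ι : Type*} (s : Finset ι) {c : ι → ℝ} {R : ℝ}
    (hR : 0 ≤ R) (h : ∑ r ∈ s, c r ^ 2 ≤ R ^ 2) :
    ∑ r ∈ s, c r ≤ √(#s : ℝ) * R := by
  refine le_of_sq_le_sq ?_ (by positivity)
  calc (∑ r ∈ s, c r) ^ 2 ≤ #s * ∑ r ∈ s, c r ^ 2 := sq_sum_le_card_mul_sum_sq
    _ ≤ #s * R ^ 2 := by gcongr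
    _ = (√(#s : ℝ) * R) ^ 2 := by rw [mul_pow, Real.sq_sqrt (Nat.cast_nonneg _)]

section Network

variable {ι E : Type*} [Fintype ι] [NormedAddCommGroup E] [InnerProductSpace ℝ E]

noncomputable def reluNet (θ : ι → E) (b : ι → ℝ) (z : E) : ℝ :=
  ∑ r, b r * max ⟪θ r, z⟫ 0

noncomputable def linearizedNet (θ₀ θ : ι → E) (b : ι → ℝ) (z : E) : ℝ :=
  ∑ r, b r * ((if 0 < ⟪θ₀ r, z⟫ then 1 else 0) * ⟪θ r, z⟫)

lemma abs_inner_sub_inner_le {w w₀ z : E} (hz : ‖z‖ ≤ 1) : |⟪w, z⟫ - ⟪w₀, z⟫| ≤ ‖w - w₀‖ := by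
  rw [← inner_sub_left]
  exact (abs_real_inner_le_norm _ _).trans (mul_le_of_le_one_right (norm_nonneg _) hz)

lemma abs_reluNet_sub_linearizedNet_le (θ₀ θ : ι → E) {b : ι → ℝ} (hb : ∀ r, |b r| ≤ 1) {z : E}
    (hz : ‖z‖ ≤ 1) :
    |reluNet θ b z - linearizedNet θ₀ θ b z| ≤
      ∑ r, if |⟪θ₀ r, z⟫| ≤ ‖θ r - θ₀ r‖ then ‖θ r - θ₀ r‖ else 0 := by
  rw [reluNet, linearizedNet, ← sum_sub_distrib]
  refine (abs_sum_le_sum_abs _ _).trans (sum_le_sum fun r _ => ?_)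
  rw [← mul_sub, abs_mul]
  exact (mul_le_of_le_one_left (abs_nonneg _) (hb r)).trans
    (abs_relu_sub_gated_le_ite (abs_inner_sub_inner_le hz))

lemma sq_abs_reluNet_sub_linearizedNet_le (θ₀ θ : ι → E) {b : ι → ℝ} (hb : ∀ r, |b r| ≤ 1)
    {R : ℝ} (hθ : ∑ r, ‖θ r - θ₀ r‖ ^ 2 ≤ R ^ 2) {z : E} (hz : ‖z‖ ≤ 1) :
    |reluNet θ b z - linearizedNet θ₀ θ b z| ^ 2 ≤
      R ^ 2 * #{r | |⟪θ₀ r, z⟫| ≤ ‖θ r - θ₀ r‖} := by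
  calc _ ≤ (∑ r, if |⟪θ₀ r, z⟫| ≤ ‖θ r - θ₀ r‖ then ‖θ r - θ₀ r‖ else 0) ^ 2 := by
        gcongr
        exact abs_reluNet_sub_linearizedNet_le θ₀ θ hb hz
    _ ≤ (∑ r, ‖θ r - θ₀ r‖ ^ 2) * #{r | |⟪θ₀ r, z⟫| ≤ ‖θ r - θ₀ r‖} :=
        sq_sum_ite_le_sum_sq_mul_card _ _ _
    _ ≤ _ := by gcongr

end Network

section Measure

variable {X ι : Type*} [MeasurableSpace X] [Fintype ι]

open scoped Classical in
lemma integrable_and_integral_card_filter_mem (μ : Measure X) [IsFiniteMeasure μ] {S : ι → Set X}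
    (hS : ∀ r, MeasurableSet (S r)) :
    Integrable (fun x => (#{r | x ∈ S r} : ℝ)) μ ∧
      ∫ x, (#{r | x ∈ S r} : ℝ) ∂μ = ∑ r, μ.real (S r) := by
  have hcount : (fun x => (#{r | x ∈ S r} : ℝ)) = fun x => ∑ r, (S r).indicator 1 x := by
    ext x
    simp only [card_filter, Nat.cast_sum, Nat.cast_ite, Nat.cast_one, Nat.cast_zero,
      Set.indicator_apply, Pi.one_apply]
  have hint : ∀ r ∈ (univ : Finset ι), Integrable ((S r).indicator 1) μ :=
    fun r _ => (integrable_const (1 : ℝ)).indicator (hS r)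
  rw [hcount]
  refine ⟨integrable_finsetSum _ hint, ?_⟩
  rw [integral_finsetSum _ hint]
  exact sum_congr rfl fun r _ => integral_indicator_one (hS r)

variable {E : Type*} [NormedAddCommGroup E] [InnerProductSpace ℝ E]

def AntiConcentrated (μ : Measure X) (ψ : X → E) (C₀ : ℝ) : Prop :=
  ∀ u : E, ‖u‖ = 1 → ∀ τ : ℝ, 0 ≤ τ → μ {x | |⟪u, ψ x⟫| ≤ τ} ≤ ENNReal.ofReal (C₀ * τ)

lemma AntiConcentrated.measureReal_abs_inner_le {μ : Measure X} {ψ : X → E} {C₀ : ℝ}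
    (hanti : AntiConcentrated μ ψ C₀) (hC₀ : 0 ≤ C₀) {v : E} (hv : v ≠ 0) {τ : ℝ} (hτ : 0 ≤ τ) :
    μ.real {x | |⟪v, ψ x⟫| ≤ τ} ≤ C₀ * τ / ‖v‖ := by
  have hv' : 0 < ‖v‖ := norm_pos_iff.mpr hv
  have hslab : {x | |⟪v, ψ x⟫| ≤ τ} = {x | |⟪‖v‖⁻¹ • v, ψ x⟫| ≤ τ / ‖v‖} := by
    ext x
    rw [Set.mem_ofPred_eq, Set.mem_ofPred_eq, real_inner_smul_left, abs_mul, abs_inv, abs_norm,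
      inv_mul_le_iff₀ hv', mul_div_cancel₀ _ hv'.ne']
  rw [hslab, measureReal_def, mul_div_assoc]
  refine ENNReal.toReal_le_of_le_ofReal (by positivity) (hanti _ ?_ _ (by positivity))
  rw [norm_smul, norm_inv, norm_norm, inv_mul_cancel₀ hv'.ne']

variable [MeasurableSpace E] [OpensMeasurableSpace E] [SecondCountableTopology E]

lemma integral_sq_abs_reluNet_sub_linearizedNet_le (μ : Measure X) [IsFiniteMeasure μ]
    {ψ : X → E} (hψmeas : Measurable ψ) (hψ : ∀ x, ‖ψ x‖ ≤ 1) {C₀ : ℝ} (hC₀ : 0 ≤ C₀)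
    (hanti : AntiConcentrated μ ψ C₀) (θ₀ θ : ι → E) {b : ι → ℝ} (hb : ∀ r, |b r| ≤ 1)
    {d₁ R : ℝ} (hd₁ : 0 < d₁) (hR : 0 ≤ R) (hθ₀ : ∀ r, d₁ ≤ ‖θ₀ r‖)
    (hθ : ∑ r, ‖θ r - θ₀ r‖ ^ 2 ≤ R ^ 2) :
    ∫ x, |reluNet θ b (ψ x) - linearizedNet θ₀ θ b (ψ x)| ^ 2 ∂μ ≤
      C₀ * R ^ 3 * √(Fintype.card ι) / d₁ := by
  classical
  set S : ι → Set X := fun r => {x | |⟪θ₀ r, ψ x⟫| ≤ ‖θ r - θ₀ r‖}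
  have hS : ∀ r, MeasurableSet (S r) := fun r =>
    measurableSet_le hψmeas.const_inner.abs measurable_const
  obtain ⟨hcount_int, hcount⟩ := integrable_and_integral_card_filter_mem μ hS
  have hslab : ∀ r, μ.real (S r) ≤ C₀ / d₁ * ‖θ r - θ₀ r‖ := fun r => calc
    μ.real (S r) ≤ C₀ * ‖θ r - θ₀ r‖ / ‖θ₀ r‖ :=
        hanti.measureReal_abs_inner_le hC₀ (norm_pos_iff.mp (hd₁.trans_le (hθ₀ r)))
          (norm_nonneg _)
    _ ≤ C₀ * ‖θ r - θ₀ r‖ / d₁ := by gcongr; exact hθ₀ r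
    _ = C₀ / d₁ * ‖θ r - θ₀ r‖ := by ring
  calc _ ≤ ∫ x, R ^ 2 * (#{r | x ∈ S r} : ℝ) ∂μ :=
        integral_mono_of_nonneg (ae_of_all _ fun x => by positivity) (hcount_int.const_mul _)
          (ae_of_all _ fun x => sq_abs_reluNet_sub_linearizedNet_le θ₀ θ hb hθ (hψ x))
    _ = R ^ 2 * ∑ r, μ.real (S r) := by rw [integral_const_mul, hcount]
    _ ≤ R ^ 2 * (C₀ / d₁ * (√(Fintype.card ι) * R)) := by
        gcongr
        calc ∑ r, μ.real (S r) ≤ ∑ r, C₀ / d₁ * ‖θ r - θ₀ r‖ := sum_le_sum fun r _ => hslab r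
          _ ≤ C₀ / d₁ * (√(Fintype.card ι) * R) := by
            rw [← mul_sum]
            gcongr
            exact sum_le_sqrt_card_mul_of_sum_sq_le univ hR hθ
    _ = C₀ * R ^ 3 * √(Fintype.card ι) / d₁ := by ring

end Measure

theorem network_linearization_error_bound_general
    {X : Type*} [MeasurableSpace X] (μ : Measure X) [IsProbabilityMeasure μ]
    {d m : ℕ}
    (ψ : X → EuclideanSpace ℝ (Fin d)) (hψmeas : Measurable ψ)
    (hψ : ∀ x, ‖ψ x‖ ≤ 1)
    (C₀ : ℝ) (hC₀ : 0 < C₀)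
    (hanti : ∀ u : EuclideanSpace ℝ (Fin d), ‖u‖ = 1 → ∀ τ : ℝ, 0 ≤ τ →
      μ {x | |⟪u, ψ x⟫| ≤ τ} ≤ ENNReal.ofReal (C₀ * τ))
    (θ₀ θ : Fin m → EuclideanSpace ℝ (Fin d)) (b : Fin m → ℝ)
    (hb : ∀ r, |b r| ≤ 1)
    (d₁ R : ℝ) (hd₁ : 0 < d₁) (hR : 0 ≤ R)
    (hθ₀ : ∀ r, d₁ ≤ ‖θ₀ r‖)
    (hθ : ∑ r, ‖θ r - θ₀ r‖ ^ 2 ≤ R ^ 2)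
    (f f₀ : X → ℝ)
    (hf : ∀ x, f x = (1 / Real.sqrt m) * ∑ r, b r * max (⟪θ r, ψ x⟫) 0)
    (hf₀ : ∀ x, f₀ x = (1 / Real.sqrt m) * ∑ r, b r *
        ((if 0 < ⟪θ₀ r, ψ x⟫ then (1 : ℝ) else 0) * ⟪θ r, ψ x⟫)) :
    ∫ x, |f x - f₀ x| ^ 2 ∂μ ≤ 4 * C₀ * R ^ 3 / (d₁ * Real.sqrt m) := by
  have hscale : ∀ x,
      |f x - f₀ x| ^ 2 = |reluNet θ b (ψ x) - linearizedNet θ₀ θ b (ψ x)| ^ 2 / m := fun x => by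
    rw [hf, hf₀, ← mul_sub, abs_mul, mul_pow, abs_of_nonneg (by positivity), div_pow,
      Real.sq_sqrt (Nat.cast_nonneg m), one_pow, one_div_mul_eq_div]
    rfl
  have hunscaled := integral_sq_abs_reluNet_sub_linearizedNet_le μ hψmeas hψ hC₀.le hanti
    θ₀ θ hb hd₁ hR hθ₀ hθ
  rw [Fintype.card_fin] at hunscaled
  calc ∫ x, |f x - f₀ x| ^ 2 ∂μ ≤ C₀ * R ^ 3 * √m / d₁ / m := by
        simp_rw [hscale, integral_div]
        gcongr
    _ = C₀ * R ^ 3 / (d₁ * √m) := by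
        rw [mul_div_right_comm, mul_div_assoc, Real.sqrt_div_self']
        ring
    _ ≤ 4 * C₀ * R ^ 3 / (d₁ * √m) := by gcongr; linarith

/-- For the two-layer ReLU network
`f(x;θ) = (1/√m) ∑_r b_r · ReLU(θ_rᵀψ(x))` with `|b_r| ≤ 1` and its
linearization `f₀(x;θ) = (1/√m) ∑_r b_r 𝟙(θ_{0,r}ᵀψ(x) > 0) θ_rᵀψ(x)`, under
the anti-concentration assumption on the feature distribution, if
`∑_r ‖θ_r − θ_{0,r}‖₂² ≤ R²` and `d₁ ≤ ‖θ_{0,r}‖₂` for all `r`, then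
`E_{x∼μ}[|f(x;θ) − f₀(x;θ)|²] ≤ 4 C₀ R³/(d₁ √m)`. -/
theorem network_linearization_error_bound
    {X : Type*} [MeasurableSpace X] (μ : Measure X) [IsProbabilityMeasure μ]
    {d m : ℕ} (hm : 0 < m)
    (ψ : X → EuclideanSpace ℝ (Fin d)) (hψmeas : Measurable ψ)
    (hψ : ∀ x, ‖ψ x‖ ≤ 1)
    (C₀ : ℝ) (hC₀ : 0 < C₀)
    (hanti : ∀ u : EuclideanSpace ℝ (Fin d), ‖u‖ = 1 → ∀ τ : ℝ, 0 ≤ τ →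
      μ {x | |⟪u, ψ x⟫| ≤ τ} ≤ ENNReal.ofReal (C₀ * τ))
    (θ₀ θ : Fin m → EuclideanSpace ℝ (Fin d)) (b : Fin m → ℝ)
    (hb : ∀ r, |b r| ≤ 1)
    (d₁ R : ℝ) (hd₁ : 0 < d₁) (hR : 0 ≤ R)
    (hθ₀ : ∀ r, d₁ ≤ ‖θ₀ r‖)
    (hθ : ∑ r, ‖θ r - θ₀ r‖ ^ 2 ≤ R ^ 2)
    (f f₀ : X → ℝ)
    (hf : ∀ x, f x = (1 / Real.sqrt m) * ∑ r, b r * max (⟪θ r, ψ x⟫) 0)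
    (hf₀ : ∀ x, f₀ x = (1 / Real.sqrt m) * ∑ r, b r *
        ((if 0 < ⟪θ₀ r, ψ x⟫ then (1 : ℝ) else 0) * ⟪θ r, ψ x⟫)) :
    ∫ x, |f x - f₀ x| ^ 2 ∂μ ≤ 4 * C₀ * R ^ 3 / (d₁ * Real.sqrt m) :=
  network_linearization_error_bound_general μ ψ hψmeas hψ C₀ hC₀ hanti θ₀ θ b hb d₁ R hd₁ hR hθ₀ hθ
    f f₀ hf hf₀
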